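/- arXiv:2308.10883 — 3 statements merged into one kernel-verified Lean document; each statement's English description precedes it below -/
import Mathlib

section
/- The N×N Cauchy–Vandermonde matrix B, whose (n,j) entry for j ≤ L is 1/(f_j − α_n) and for L < j ≤ N is α_n^{j−L−1}, is invertible, provided α_1,…,α_N, f_1,…,f_L are N+L distinct elements of a field F. -/
open Polynomial Finset

/-- The N×N Cauchy–Vandermonde matrix is invertible when the α's and f's are
N+L pairwise distinct elements of a field. -/
theorem cauchy_vandermonde_invertible {F : Type*} [Field F] (N L : ℕ)
    (hN : 1 ≤ N) (hL : L ≤ N) (α : Fin N → F) (f : Fin L → F)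
    (hdist : Function.Injective (Sum.elim α f : Fin N ⊕ Fin L → F))
    (B : Matrix (Fin N) (Fin N) F)
    (hB : ∀ n j, B n j =
      if h : (j : ℕ) < L then (f ⟨j, h⟩ - α n)⁻¹ else (α n) ^ ((j : ℕ) - L)) :
    IsUnit B := by
  classical
  rw [Matrix.isUnit_iff_isUnit_det, isUnit_iff_ne_zero]
  intro hdet
  obtain ⟨v, hv, hmul⟩ := Matrix.exists_mulVec_eq_zero_iff.mpr hdet
  have hfα : ∀ (k : Fin L) (n : Fin N), f k - α n ≠ 0 := by
    intro k n h
    have h2 : (Sum.elim α f : Fin N ⊕ Fin L → F) (Sum.inl n)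
        = (Sum.elim α f : Fin N ⊕ Fin L → F) (Sum.inr k) := by
      simpa using (sub_eq_zero.mp h).symm
    simpa using hdist h2
  have hαinj : Function.Injective α := by
    intro a b h
    have := hdist (a₁ := Sum.inl a) (a₂ := Sum.inl b) (by simpa using h)
    simpa using this
  have hfinj : Function.Injective f := by
    intro a b h
    have := hdist (a₁ := Sum.inr a) (a₂ := Sum.inr b) (by simpa using h)
    simpa using this
  set Q : F[X] := ∏ k : Fin L, (C (f k) - X) with hQ
  set P : F[X] := ∑ j : Fin N, C (v j) *
      (if h : (j : ℕ) < L then ∏ k ∈ Finset.univ.erase (⟨j, h⟩ : Fin L), (C (f k) - X)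
        else X ^ ((j : ℕ) - L) * Q) with hP
  have hQeval : ∀ x : F, Q.eval x = ∏ k : Fin L, (f k - x) := by
    intro x; simp [hQ, Polynomial.eval_prod]
  -- P vanishes at each α n
  have hevalα : ∀ n, P.eval (α n) = 0 := by
    intro n
    have h0 : ∑ j, B n j * v j = 0 := by
      simpa [Matrix.mulVec, dotProduct] using congrFun hmul n
    have key : P.eval (α n) = Q.eval (α n) * ∑ j, B n j * v j := by
      rw [hP, Polynomial.eval_finset_sum, Finset.mul_sum]
      refine Finset.sum_congr rfl fun j _ => ?_
      rw [hB]
      split_ifs with h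
      · have hsplit : (∏ k : Fin L, (f k - α n))
            = (f ⟨j, h⟩ - α n) * ∏ k ∈ Finset.univ.erase (⟨j, h⟩ : Fin L), (f k - α n) :=
          (Finset.mul_prod_erase _ _ (Finset.mem_univ _)).symm
        simp only [Polynomial.eval_mul, Polynomial.eval_C, Polynomial.eval_prod,
          Polynomial.eval_sub, Polynomial.eval_X]
        rw [hQeval, hsplit]
        field_simp [hfα ⟨j, h⟩ n]
      · simp only [Polynomial.eval_mul, Polynomial.eval_C, Polynomial.eval_pow,
          Polynomial.eval_X]
        ring
    rw [key, h0, mul_zero]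
  -- degree bound
  have hdeg : P.natDegree < N := by
    have hb : P.natDegree ≤ N - 1 := by
      rw [hP]
      apply Polynomial.natDegree_sum_le_of_forall_le
      intro j _
      refine (Polynomial.natDegree_C_mul_le _ _).trans ?_
      split_ifs with h
      · refine (Polynomial.natDegree_prod_le _ _).trans ?_
        have h1 : ∀ k ∈ Finset.univ.erase (⟨j, h⟩ : Fin L), (C (f k) - X).natDegree ≤ 1 := by
          intro k _
          refine (Polynomial.natDegree_sub_le _ _).trans ?_
          simp
        have hb2 := Finset.sum_le_card_nsmul (Finset.univ.erase (⟨j, h⟩ : Fin L))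
          (fun k => (C (f k) - X).natDegree) 1 h1
        refine hb2.trans ?_
        rw [Finset.card_erase_of_mem (Finset.mem_univ _)]
        simp only [smul_eq_mul, mul_one, Finset.card_univ, Fintype.card_fin]
        omega
      · refine (Polynomial.natDegree_mul_le).trans ?_
        have hQdeg : Q.natDegree ≤ L := by
          rw [hQ]
          refine (Polynomial.natDegree_prod_le _ _).trans ?_
          have hb2 := Finset.sum_le_card_nsmul (Finset.univ : Finset (Fin L))
            (fun k => (C (f k) - X).natDegree) 1
            (fun k _ => (Polynomial.natDegree_sub_le _ _).trans (by simp))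
          simpa using hb2
        have : (X ^ ((j : ℕ) - L) : F[X]).natDegree ≤ (j : ℕ) - L :=
          le_of_eq (Polynomial.natDegree_X_pow _)
        have hj := j.2
        omega
    omega
  have hPzero : P = 0 := by
    refine Polynomial.eq_zero_of_natDegree_lt_card_of_eval_eq_zero P hαinj hevalα ?_
    simpa using hdeg
  -- v vanishes on indices < L
  have hvL : ∀ (j : Fin N) (h : (j : ℕ) < L), v j = 0 := by
    intro j0 h0
    set J : Fin N := j0 with hJ
    have heval : P.eval (f ⟨j0, h0⟩) = 0 := by rw [hPzero]; simp
    rw [hP, Polynomial.eval_finset_sum] at heval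
    rw [Finset.sum_eq_single j0] at heval
    · rw [dif_pos h0] at heval
      simp only [Polynomial.eval_mul, Polynomial.eval_C, Polynomial.eval_prod,
        Polynomial.eval_sub, Polynomial.eval_X] at heval
      have hne : (∏ k ∈ Finset.univ.erase (⟨j0, h0⟩ : Fin L), (f k - f ⟨j0, h0⟩)) ≠ 0 := by
        refine Finset.prod_ne_zero_iff.mpr fun k hk => ?_
        have hk' : k ≠ ⟨j0, h0⟩ := (Finset.mem_erase.mp hk).1
        exact sub_ne_zero.mpr fun hE => hk' (hfinj hE)
      exact (mul_eq_zero.mp heval).resolve_right hne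
    · intro i _ hij
      split_ifs with hi
      · have hmem : (⟨j0, h0⟩ : Fin L) ∈ Finset.univ.erase (⟨i, hi⟩ : Fin L) := by
          refine Finset.mem_erase.mpr ⟨?_, Finset.mem_univ _⟩
          intro hE
          exact hij (Fin.ext (by simpa using (congrArg Fin.val hE).symm))
        simp only [Polynomial.eval_mul, Polynomial.eval_C, Polynomial.eval_prod,
          Polynomial.eval_sub, Polynomial.eval_X]
        rw [Finset.prod_eq_zero hmem (by ring), mul_zero]
      · have hmem : (⟨j0, h0⟩ : Fin L) ∈ (Finset.univ : Finset (Fin L)) := Finset.mem_univ _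
        simp only [Polynomial.eval_mul, Polynomial.eval_C, Polynomial.eval_pow,
          Polynomial.eval_X, hQeval]
        rw [Finset.prod_eq_zero hmem (by ring)]
        ring
    · intro h; exact absurd (Finset.mem_univ _) h
  -- now P = R * Q with R the Vandermonde part, so R = 0
  have hPeq : P = (∑ j ∈ Finset.univ.filter (fun j : Fin N => ¬ (j : ℕ) < L),
      C (v j) * X ^ ((j : ℕ) - L)) * Q := by
    rw [hP, Finset.sum_mul,
      ← Finset.sum_filter_add_sum_filter_not Finset.univ (fun j : Fin N => (j : ℕ) < L)]
    have h1 : ∑ j ∈ Finset.univ.filter (fun j : Fin N => (j : ℕ) < L), (C (v j) *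
        (if h : (j : ℕ) < L then ∏ k ∈ Finset.univ.erase (⟨j, h⟩ : Fin L), (C (f k) - X)
          else X ^ ((j : ℕ) - L) * Q)) = 0 := by
      refine Finset.sum_eq_zero fun j hj => ?_
      rw [hvL j (Finset.mem_filter.mp hj).2]
      simp
    have h2 : ∑ j ∈ Finset.univ.filter (fun j : Fin N => ¬ (j : ℕ) < L), (C (v j) *
        (if h : (j : ℕ) < L then ∏ k ∈ Finset.univ.erase (⟨j, h⟩ : Fin L), (C (f k) - X)
          else X ^ ((j : ℕ) - L) * Q))
        = ∑ j ∈ Finset.univ.filter (fun j : Fin N => ¬ (j : ℕ) < L),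
          C (v j) * X ^ ((j : ℕ) - L) * Q := by
      refine Finset.sum_congr rfl fun j hj => ?_
      rw [dif_neg (Finset.mem_filter.mp hj).2, mul_assoc]
    rw [h1, h2, zero_add]
  have hQne : Q ≠ 0 := by
    rw [hQ]
    refine Finset.prod_ne_zero_iff.mpr fun k _ => ?_
    intro h
    have := congrArg (fun p : F[X] => p.coeff 1) h
    simp [Polynomial.coeff_C] at this
  have hR0 : (∑ j ∈ Finset.univ.filter (fun j : Fin N => ¬ (j : ℕ) < L),
      C (v j) * X ^ ((j : ℕ) - L)) = 0 := by
    have := hPeq.symm.trans hPzero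
    exact (mul_eq_zero.mp this).resolve_right hQne
  have hvR : ∀ (j : Fin N), ¬ (j : ℕ) < L → v j = 0 := by
    intro j hjL
    have hc : (∑ i ∈ Finset.univ.filter (fun i : Fin N => ¬ (i : ℕ) < L),
        C (v i) * X ^ ((i : ℕ) - L)).coeff ((j : ℕ) - L) = 0 := by rw [hR0]; simp
    rw [Polynomial.finset_sum_coeff] at hc
    rw [Finset.sum_eq_single j] at hc
    · simpa using hc
    · intro i hi hne
      simp only [Polynomial.coeff_C_mul, Polynomial.coeff_X_pow]
      rw [if_neg, mul_zero]
      intro hE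
      have hiL : L ≤ (i : ℕ) := le_of_not_gt (Finset.mem_filter.mp hi).2
      have hjL' : L ≤ (j : ℕ) := le_of_not_gt hjL
      exact hne (Fin.ext (by omega))
    · intro h
      exact absurd (Finset.mem_filter.mpr ⟨Finset.mem_univ j, hjL⟩) h
  exact hv (funext fun j => by
    by_cases h : (j : ℕ) < L
    · exact hvL j h
    · exact hvR j h)
end

section
/- Multiplying each row n of the Cauchy–Vandermonde matrix B by the nonzero scalar γ_n = ∏_{i=1}^{L}(f_i − α_n) preserves invertibility; i.e., diag(γ)·B is invertible. -/
set_option maxHeartbeats 1000000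

open Polynomial Finset

/-- Row-scaling the Cauchy–Vandermonde matrix by the nonzero scalars
γ_n = ∏_{i=1}^{L}(f_i − α_n) preserves invertibility: diag(γ)·B is invertible. -/
theorem diag_mul_cauchy_vandermonde_invertible {F : Type*} [Field F] (N L : ℕ)
    (hN : 1 ≤ N) (hL : L ≤ N) (α : Fin N → F) (f : Fin L → F)
    (hdist : Function.Injective (Sum.elim α f : Fin N ⊕ Fin L → F))
    (B : Matrix (Fin N) (Fin N) F)
    (hB : ∀ n j, B n j =
      if h : (j : ℕ) < L then (f ⟨j, h⟩ - α n)⁻¹ else (α n) ^ ((j : ℕ) - L))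
    (γ : Fin N → F) (hγ : ∀ n, γ n = ∏ i : Fin L, (f i - α n)) :
    IsUnit (Matrix.diagonal γ * B) := by
  classical
  have hfa : ∀ (i : Fin L) (n : Fin N), f i - α n ≠ 0 := by
    intro i n h
    have h2 : (Sum.elim α f : Fin N ⊕ Fin L → F) (Sum.inr i)
        = (Sum.elim α f : Fin N ⊕ Fin L → F) (Sum.inl n) := by
      simpa using sub_eq_zero.mp h
    exact absurd (hdist h2) (by simp)
  have hα : Function.Injective α := fun n m h => by
    have := hdist (a₁ := Sum.inl n) (a₂ := Sum.inl m) (by simpa using h)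
    simpa using this
  have hf : Function.Injective f := fun i k h => by
    have := hdist (a₁ := Sum.inr i) (a₂ := Sum.inr k) (by simpa using h)
    simpa using this
  have hlin : ∀ a : F, (C a - X : F[X]) ≠ 0 := by
    intro a h
    have := congrArg (fun q => Polynomial.coeff q 1) h
    simp at this
  have hlindeg : ∀ a : F, (C a - X : F[X]).natDegree = 1 := by
    intro a
    rw [show (C a - X : F[X]) = -(X - C a) by ring, natDegree_neg, natDegree_X_sub_C]
  set P : F[X] := ∏ i : Fin L, (C (f i) - X) with hPdef
  have hP0 : P ≠ 0 := prod_ne_zero_iff.mpr fun i _ => hlin (f i)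
  have hPdeg : P.natDegree = L := by
    rw [hPdef, natDegree_prod _ _ (fun i _ => hlin (f i))]
    simp [hlindeg]
  set p : Fin N → F[X] := fun j =>
    if h : (j : ℕ) < L then ∏ i ∈ Finset.univ.erase ⟨j, h⟩, (C (f i) - X)
    else P * X ^ ((j : ℕ) - L) with hpdef
  have hpdeg : ∀ j, (p j).natDegree < N := by
    intro j
    by_cases h : (j : ℕ) < L
    · rw [hpdef]
      simp only [dif_pos h]
      rw [natDegree_prod _ _ (fun i _ => hlin (f i))]
      simp only [hlindeg]
      rw [Finset.sum_const, Finset.card_erase_of_mem (Finset.mem_univ _),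
        Finset.card_univ, Fintype.card_fin]
      simp only [smul_eq_mul, mul_one]
      omega
    · rw [hpdef]
      simp only [dif_neg h]
      rw [natDegree_mul hP0 (pow_ne_zero _ X_ne_zero), hPdeg, natDegree_pow, natDegree_X]
      have := j.isLt
      omega
  have heval : ∀ n j, (p j).eval (α n) = γ n * B n j := by
    intro n j
    by_cases h : (j : ℕ) < L
    · rw [hpdef]
      simp only [dif_pos h, hB n j, dif_pos h, hγ n, eval_prod, eval_sub, eval_C, eval_X]
      rw [← Finset.mul_prod_erase _ _ (Finset.mem_univ (⟨(j : ℕ), h⟩ : Fin L))]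
      field_simp [hfa]
    · rw [hpdef]
      simp only [dif_neg h, hB n j, dif_neg h, hγ n, eval_mul, eval_pow, eval_prod,
        eval_sub, eval_C, eval_X, hPdef]
  rw [← Matrix.mulVec_injective_iff_isUnit]
  have key : ∀ v, (Matrix.diagonal γ * B).mulVec v = 0 → v = 0 := by
    intro v hv
    set q : F[X] := ∑ j : Fin N, C (v j) * p j with hqdef
    have hq0 : q = 0 := by
      apply Polynomial.eq_zero_of_natDegree_lt_card_of_eval_eq_zero q hα
      · intro n
        have hvn := congrFun hv n
        simp only [Matrix.mulVec, dotProduct, Pi.zero_apply] at hvn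
        rw [hqdef, eval_finset_sum]
        simp only [eval_mul, eval_C, heval]
        rw [← hvn]
        apply Finset.sum_congr rfl
        intro j _
        rw [Matrix.diagonal_mul]
        ring
      · rw [Fintype.card_fin, hqdef]
        have hb : ∀ j ∈ Finset.univ, (C (v j) * p j).natDegree ≤ N - 1 := by
          intro j _
          have hj := hpdeg j
          calc (C (v j) * p j).natDegree ≤ (C (v j)).natDegree + (p j).natDegree :=
                natDegree_mul_le
            _ ≤ N - 1 := by rw [natDegree_C]; omega
        have := Polynomial.natDegree_sum_le_of_forall_le Finset.univ _ hb
        omega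
    -- Step A: entries with index < L vanish
    have hvlow : ∀ (j : Fin N) (h : (j : ℕ) < L), v j = 0 := by
      intro j h
      have hev := congrArg (Polynomial.eval (f ⟨(j : ℕ), h⟩)) hq0
      rw [hqdef, eval_finset_sum] at hev
      simp only [eval_mul, eval_C, eval_zero] at hev
      rw [Finset.sum_eq_single j] at hev
      · rw [hpdef] at hev
        simp only [dif_pos h, eval_prod, eval_sub, eval_C, eval_X] at hev
        have hne : ∏ i ∈ Finset.univ.erase (⟨(j : ℕ), h⟩ : Fin L),
            (f i - f ⟨(j : ℕ), h⟩) ≠ 0 := by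
          apply prod_ne_zero_iff.mpr
          intro i hi
          intro hzero
          exact (Finset.ne_of_mem_erase hi) (hf (sub_eq_zero.mp hzero))
        exact (mul_eq_zero.mp hev).resolve_right hne
      · intro j' _ hj'
        rw [hpdef]
        by_cases h' : (j' : ℕ) < L
        · simp only [dif_pos h', eval_prod, eval_sub, eval_C, eval_X]
          have hmem : (⟨(j : ℕ), h⟩ : Fin L) ∈ Finset.univ.erase (⟨(j' : ℕ), h'⟩ : Fin L) := by
            apply Finset.mem_erase_of_ne_of_mem _ (Finset.mem_univ _)
            intro hc
            exact hj' (Fin.ext (by simpa using congrArg Fin.val hc.symm))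
          rw [Finset.prod_eq_zero hmem (by simp), mul_zero]
        · simp only [dif_neg h', eval_mul, hPdef, eval_prod, eval_sub, eval_C, eval_X]
          rw [Finset.prod_eq_zero (Finset.mem_univ (⟨(j : ℕ), h⟩ : Fin L)) (by simp)]
          ring
      · simp
    -- Step B: q = P * r with r the tail polynomial
    set r : F[X] := ∑ j ∈ Finset.univ.filter (fun j : Fin N => ¬ (j : ℕ) < L),
      C (v j) * X ^ ((j : ℕ) - L) with hrdef
    have hqPr : q = P * r := by
      rw [hqdef, hrdef, Finset.mul_sum,
        ← Finset.sum_filter_add_sum_filter_not Finset.univ (fun j : Fin N => (j : ℕ) < L)]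
      have h1 : ∑ j ∈ Finset.univ.filter (fun j : Fin N => (j : ℕ) < L),
          C (v j) * p j = 0 := by
        apply Finset.sum_eq_zero
        intro j hj
        rw [hvlow j (Finset.mem_filter.mp hj).2]
        simp
      rw [h1, zero_add]
      apply Finset.sum_congr rfl
      intro j hj
      have h' := (Finset.mem_filter.mp hj).2
      rw [hpdef]
      simp only [dif_neg h']
      ring
    have hr0 : r = 0 := by
      rcases mul_eq_zero.mp (hqPr ▸ hq0) with h | h
      · exact absurd h hP0
      · exact h
    -- Step C: entries with index ≥ L vanish
    have hvhigh : ∀ (j : Fin N), ¬ (j : ℕ) < L → v j = 0 := by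
      intro j h
      have hc := congrArg (fun s => Polynomial.coeff s ((j : ℕ) - L)) hr0
      rw [hrdef] at hc
      simp only [finset_sum_coeff, coeff_C_mul, coeff_X_pow, coeff_zero] at hc
      rw [Finset.sum_eq_single j] at hc
      · simpa using hc
      · intro j' hj' hne
        have h' := (Finset.mem_filter.mp hj').2
        have : ¬ ((j : ℕ) - L = (j' : ℕ) - L) := by
          intro hc2
          exact hne (Fin.ext (by omega))
        simp [this]
      · intro hc2
        exact absurd (Finset.mem_filter.mpr ⟨Finset.mem_univ j, h⟩) hc2
    funext j
    by_cases h : (j : ℕ) < L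
    · exact hvlow j h
    · exact hvhigh j h
  intro v w hvw
  have : (Matrix.diagonal γ * B).mulVec (v - w) = 0 := by
    rw [Matrix.mulVec_sub, hvw, sub_self]
  have := key _ this
  exact sub_eq_zero.mp (by simpa using this)
end

section
/- For any polynomial expression: the product of ∏_{i=1}^L (f_i − α)/(f_j − α) with (f_j − α)^k, summed appropriately, is a polynomial in α of degree at most L + k − 1; consequently, the answer A_n^{[θ]} = S_n^t Q_n^{[θ]} equals γ_n (∑_{i=1}^L W_{θ,i}/(f_i − α_n) + ∑_{i=0}^{X+M−1} I_i α_n^i) for some coefficients I_i independent of n. -/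
/-!
Write `d = f_j − α_n`. Each summand `S_n(j)ᵗ Q_n(j)` is `γ_n / d · P_j(d)` for a polynomial
`P_j` of degree at most `X + M` with constant term `W_{θ,j}`, which does not depend on `n`.
With `D_j = (P_j − P_j(0)) / T` we get `γ_n / d · P_j(d) = γ_n (W_{θ,j} / d + D_j(d))`, and
`D_j(f_j − α)` is a polynomial in `α` of degree less than `X + M`. The coefficients of the sum
of these polynomials over `j` are the `I_i`.
-/

open Polynomial Finset

namespace Polynomial

section Semiring

variable {R : Type*} [Semiring R]

noncomputable def consPoly {m : ℕ} (a : R) (c : Fin m → R) : R[X] :=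
  C a + ∑ i : Fin m, X ^ ((i : ℕ) + 1) * C (c i)

theorem coeff_zero_consPoly {m : ℕ} (a : R) (c : Fin m → R) : (consPoly a c).coeff 0 = a := by
  simp [consPoly, finsetSum_coeff]

theorem natDegree_consPoly_le {m : ℕ} (a : R) (c : Fin m → R) : (consPoly a c).natDegree ≤ m := by
  refine natDegree_add_le_of_degree_le ((natDegree_C a).trans_le m.zero_le) ?_
  refine natDegree_sum_le_of_forall_le _ _ fun i _ => ?_
  exact (natDegree_mul_C_le _ _).trans ((natDegree_X_pow_le _).trans i.isLt)

theorem divX_mem_degreeLT {p : R[X]} {n : ℕ} (hp : p.natDegree ≤ n) : p.divX ∈ degreeLT R n := by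
  rcases eq_or_ne p 0 with rfl | hp0
  · simp
  · exact mem_degreeLT.2 ((degree_divX_lt hp0).trans_le (degree_le_of_natDegree_le hp))

theorem comp_mem_degreeLT {p q : R[X]} {n : ℕ} (hp : p ∈ degreeLT R n) (hq : q.natDegree ≤ 1) :
    p.comp q ∈ degreeLT R n := by
  rcases eq_or_ne p 0 with rfl | hp0
  · simp
  · have hpn : p.natDegree < n := (natDegree_lt_iff_degree_lt hp0).2 (mem_degreeLT.1 hp)
    have hcomp : (p.comp q).natDegree < n :=
      natDegree_comp_le.trans_lt ((mul_le_of_le_one_right' hq).trans_lt hpn)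
    exact mem_degreeLT.2 (degree_le_natDegree.trans_lt (by exact_mod_cast hcomp))

end Semiring

theorem eval_consPoly {R : Type*} [CommSemiring R] {m : ℕ} (a : R) (c : Fin m → R) (x : R) :
    (consPoly a c).eval x = a + ∑ i : Fin m, x ^ ((i : ℕ) + 1) * c i := by
  simp only [consPoly, eval_add, eval_C, eval_finsetSum, eval_mul, eval_pow, eval_X]

theorem div_mul_eval_eq_mul_add_eval_divX {K : Type*} [Field K] (p : K[X]) (c : K) {x : K}
    (hx : x ≠ 0) :
    c / x * p.eval x = c * (p.coeff 0 / x + p.divX.eval x) := by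
  conv_lhs => rw [← X_mul_divX_add p]
  simp only [eval_add, eval_mul, eval_X, eval_C]
  field_simp
  rw [add_comm]

end Polynomial

theorem answer_decomposition_general {F : Type*} [Field F]
    (N L K X M : ℕ)
    (α : Fin N → F) (f : Fin L → F)
    (hdist : Function.Injective (Sum.elim α f : Fin N ⊕ Fin L → F))
    (W : Fin L → Fin K → F) (R : Fin L → Fin X → Fin K → F)
    (Z : Fin L → Fin M → Fin K → F) (θ : Fin K)
    (γ : Fin N → F)
    (S : Fin N → Fin L → Fin K → F)
    (hS : ∀ n j k, S n j k = W j k + ∑ i : Fin X, (f j - α n) ^ ((i : ℕ) + 1) * R j i k)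
    (Q : Fin N → Fin L → Fin K → F)
    (hQ : ∀ n j k, Q n j k = γ n / (f j - α n) *
      ((if k = θ then 1 else 0) + ∑ i : Fin M, (f j - α n) ^ ((i : ℕ) + 1) * Z j i k))
    (A : Fin N → F) (hA : ∀ n, A n = ∑ j : Fin L, ∑ k : Fin K, S n j k * Q n j k) :
    ∃ I : Fin (X + M) → F, ∀ n, A n =
      γ n * (∑ i : Fin L, W i θ / (f i - α n) + ∑ i : Fin (X + M), I i * α n ^ (i : ℕ)) := by
  let P (j : Fin L) : F[X] := ∑ k : Fin K,
    consPoly (W j k) (R j · k) * consPoly (if k = θ then 1 else 0) (Z j · k)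
  have hP0 (j : Fin L) : (P j).coeff 0 = W j θ := by
    simp [P, mul_coeff_zero, coeff_zero_consPoly]
  have hPdeg (j : Fin L) : (P j).natDegree ≤ X + M :=
    natDegree_sum_le_of_forall_le _ _ fun k _ =>
      natDegree_mul_le_of_le (natDegree_consPoly_le _ _) (natDegree_consPoly_le _ _)
  have hG : ∑ j : Fin L, (P j).divX.comp (C (f j) - Polynomial.X) ∈ degreeLT F (X + M) :=
    Submodule.sum_mem _ fun j _ => comp_mem_degreeLT (divX_mem_degreeLT (hPdeg j))
      ((natDegree_sub_le _ _).trans (by simp))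
  refine ⟨degreeLTEquiv F _ ⟨_, hG⟩, fun n => ?_⟩
  rw [← eval_eq_sum_degreeLTEquiv, hA, eval_finsetSum, ← sum_add_distrib, mul_sum]
  refine sum_congr rfl fun j _ => ?_
  have hd : f j - α n ≠ 0 := sub_ne_zero.2 fun h =>
    Sum.inr_ne_inl (hdist (a₁ := .inr j) (a₂ := .inl n) h)
  calc ∑ k : Fin K, S n j k * Q n j k = γ n / (f j - α n) * (P j).eval (f j - α n) := by
        simp only [P, eval_finsetSum, eval_mul, eval_consPoly, hS, hQ, mul_sum]
        exact sum_congr rfl fun k _ => mul_left_comm _ _ _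
    _ = _ := by rw [div_mul_eval_eq_mul_add_eval_divX _ _ hd, hP0, eval_comp]; simp

/-- The answer A_n = S_n^t Q_n of the XSETSPIR scheme has the form
γ_n (∑_i W_{θ,i}/(f_i − α_n) + ∑_i I_i α_n^i) with coefficients I_i
independent of n. -/
theorem answer_decomposition {F : Type*} [Field F] [Fintype F]
    (N L K X M : ℕ) (hK : 1 ≤ K) (hLN : X + M + L = N)
    (α : Fin N → F) (f : Fin L → F)
    (hdist : Function.Injective (Sum.elim α f : Fin N ⊕ Fin L → F))
    (W : Fin L → Fin K → F) (R : Fin L → Fin X → Fin K → F)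
    (Z : Fin L → Fin M → Fin K → F) (θ : Fin K)
    (γ : Fin N → F) (hγ : ∀ n, γ n = ∏ i : Fin L, (f i - α n))
    (S : Fin N → Fin L → Fin K → F)
    (hS : ∀ n j k, S n j k = W j k + ∑ i : Fin X, (f j - α n) ^ ((i : ℕ) + 1) * R j i k)
    (Q : Fin N → Fin L → Fin K → F)
    (hQ : ∀ n j k, Q n j k = γ n / (f j - α n) *
      ((if k = θ then 1 else 0) + ∑ i : Fin M, (f j - α n) ^ ((i : ℕ) + 1) * Z j i k))
    (A : Fin N → F) (hA : ∀ n, A n = ∑ j : Fin L, ∑ k : Fin K, S n j k * Q n j k) :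
    ∃ I : Fin (X + M) → F, ∀ n, A n =
      γ n * (∑ i : Fin L, W i θ / (f i - α n) + ∑ i : Fin (X + M), I i * α n ^ (i : ℕ)) :=
  answer_decomposition_general N L K X M α f hdist W R Z θ γ S hS Q hQ A hA
end
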